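/- Lagrange-d'Alembert-Pontryagin principle (stationarity direction): let L : ℝ^n × ℝ^n → ℝ be continuously differentiable, let Δ : ℝ^n → Submodule(ℝ, ℝ^n) assign a linear subspace of ℝ^n to each point, and let q, v, p : [t₁,t₂] → ℝ^n be continuously differentiable curves (t₁ < t₂) satisfying, for all t: p(t) = ∂L/∂v(q(t),v(t)); q'(t) = v(t); v(t) ∈ Δ(q(t)); and (p'(t) − ∂L/∂q(q(t),v(t)))·u = 0 for all u ∈ Δ(q(t)). Then for every continuously differentiable variation (δq,δv,δp) : [t₁,t₂] → ℝ^n × ℝ^n × ℝ^n with δq(t₁) = δq(t₂) = 0 and δq(t) ∈ Δ(q(t)) for all t, the function s ↦ ∫_{t₁}^{t₂} [ L(q(t)+s δq(t), v(t)+s δv(t)) + (p(t)+s δp(t))·(q'(t)+s δq'(t) − v(t) − s δv(t)) ] dt has derivative zero at s = 0. -/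

import Mathlib

/-!
Differentiate under the integral sign: the `s`-derivative of the integrand is jointly continuous,
hence bounded on `[-1, 1] × [t₁, t₂]`. At `s = 0` the term `p · (q̇ - v)` vanishes, the Legendre
relation `p = ∂L/∂v` cancels the `δv` terms, and the Lagrange–d'Alembert equation tested on
`δq ∈ Δ(q)` replaces `∂L/∂q · δq` by `ṗ · δq`. The integrand is then `d/dt (p · δq)`, whose
integral vanishes because `δq` does at both endpoints.
-/

open scoped BigOperators

/-- The dot product on `ℝ^k`. -/
def dot {k : ℕ} (x y : Fin k → ℝ) : ℝ := ∑ i, x i * y i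

open Set Metric in
theorem intervalIntegral.hasDerivAt_integral_of_continuous_deriv
    {E : Type*} [NormedAddCommGroup E] [NormedSpace ℝ E]
    {F F' : ℝ → ℝ → E} {a b x₀ : ℝ}
    (hF : ∀ s, Continuous (F s)) (hF' : Continuous (Function.uncurry F'))
    (hF_deriv : ∀ s t, HasDerivAt (F · t) (F' s t) s) :
    HasDerivAt (fun s => ∫ t in a..b, F s t) (∫ t in a..b, F' x₀ t) x₀ := by
  obtain ⟨C, hC⟩ := ((isCompact_closedBall x₀ 1).prod isCompact_uIcc).exists_bound_of_continuousOn
    hF'.continuousOn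
  refine (hasDerivAt_integral_of_dominated_loc_of_deriv_le (bound := fun _ => C)
    (ball_mem_nhds x₀ one_pos) (.of_forall fun s => (hF s).aestronglyMeasurable)
    ((hF x₀).intervalIntegrable a b) (hF'.comp (Continuous.prodMk_right x₀)).aestronglyMeasurable
    ?_ intervalIntegrable_const (.of_forall fun t _ s _ => hF_deriv s t)).2
  exact .of_forall fun t ht s hs => hC (s, t) ⟨ball_subset_closedBall hs, uIoc_subset_uIcc ht⟩

theorem dot_eq_dotProduct {k : ℕ} (x y : Fin k → ℝ) : dot x y = x ⬝ᵥ y := rfl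

@[fun_prop]
theorem Continuous.dot {k : ℕ} {α : Type*} [TopologicalSpace α] {f g : α → Fin k → ℝ}
    (hf : Continuous f) (hg : Continuous g) : Continuous fun x => dot (f x) (g x) :=
  hf.dotProduct hg

theorem HasDerivAt.dot {k : ℕ} {f g : ℝ → Fin k → ℝ} {f' g' : Fin k → ℝ} {s : ℝ}
    (hf : HasDerivAt f f' s) (hg : HasDerivAt g g' s) :
    HasDerivAt (fun x => dot (f x) (g x)) (dot f' (g s) + dot (f s) g') s := by
  simpa [_root_.dot, Finset.sum_add_distrib] using
    HasDerivAt.fun_sum (u := Finset.univ) fun i _ =>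
      (hasDerivAt_pi.1 hf i).mul (hasDerivAt_pi.1 hg i)

theorem hasDerivAt_add_smul {E : Type*} [NormedAddCommGroup E] [NormedSpace ℝ E]
    (a b : E) (s : ℝ) : HasDerivAt (fun s : ℝ => a + s • b) b s := by
  simpa using ((hasDerivAt_id s).smul_const b).const_add a

theorem intervalIntegral.integral_deriv_dot_eq_sub {k : ℕ} {f g : ℝ → Fin k → ℝ} {a b : ℝ}
    (hf : ContDiff ℝ 1 f) (hg : ContDiff ℝ 1 g) :
    ∫ t in a..b, (dot (deriv f t) (g t) + dot (f t) (deriv g t)) =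
      dot (f b) (g b) - dot (f a) (g a) := by
  have hf' := hf.continuous_deriv le_rfl
  have hg' := hg.continuous_deriv le_rfl
  exact integral_eq_sub_of_hasDerivAt (fun t _ =>
    (hf.differentiable one_ne_zero t).hasDerivAt.dot (hg.differentiable one_ne_zero t).hasDerivAt)
    (by apply Continuous.intervalIntegrable; fun_prop)

theorem dot_add_dot_add_dot_sub_eq {k : ℕ} {Lq Lv p p' δq δq' δv : Fin k → ℝ}
    (hp : p = Lv) (hp' : dot (p' - Lq) δq = 0) :
    dot Lq δq + dot Lv δv + dot p (δq' - δv) = dot p' δq + dot p δq' := by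
  subst hp
  simp only [dot_eq_dotProduct, sub_dotProduct, dotProduct_sub] at hp' ⊢
  linarith

theorem lagrange_dAlembert_pontryagin_stationarity_general {n : ℕ}
    (L : (Fin n → ℝ) × (Fin n → ℝ) → ℝ)
    (Lq Lv : (Fin n → ℝ) × (Fin n → ℝ) → Fin n → ℝ)
    (hL : ContDiff ℝ 1 L)
    (hG : ∀ x : (Fin n → ℝ) × (Fin n → ℝ),
      ∃ f : ((Fin n → ℝ) × (Fin n → ℝ)) →L[ℝ] ℝ,
        HasFDerivAt L f x ∧
        ∀ y : (Fin n → ℝ) × (Fin n → ℝ), f y = dot (Lq x) y.1 + dot (Lv x) y.2)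
    (Δ : (Fin n → ℝ) → Submodule ℝ (Fin n → ℝ))
    (t₁ t₂ : ℝ) (ht : t₁ < t₂)
    (q v p : ℝ → Fin n → ℝ)
    (hq : ContDiff ℝ 1 q) (hv : ContDiff ℝ 1 v) (hp : ContDiff ℝ 1 p)
    (h1 : ∀ t ∈ Set.Icc t₁ t₂, p t = Lv (q t, v t))
    (h2 : ∀ t ∈ Set.Icc t₁ t₂, deriv q t = v t)
    (h4 : ∀ t ∈ Set.Icc t₁ t₂, ∀ u ∈ Δ (q t),
      dot (deriv p t - Lq (q t, v t)) u = 0)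
    (δq δv δp : ℝ → Fin n → ℝ)
    (hδq : ContDiff ℝ 1 δq) (hδv : ContDiff ℝ 1 δv) (hδp : ContDiff ℝ 1 δp)
    (hb1 : δq t₁ = 0) (hb2 : δq t₂ = 0)
    (hδΔ : ∀ t ∈ Set.Icc t₁ t₂, δq t ∈ Δ (q t)) :
    HasDerivAt (fun s : ℝ => ∫ t in t₁..t₂,
      (L (q t + s • δq t, v t + s • δv t) +
        dot (p t + s • δp t)
          (deriv q t + s • deriv δq t - v t - s • δv t)))
      0 0 := by
  have hgrad (x y) : fderiv ℝ L x y = dot (Lq x) y.1 + dot (Lv x) y.2 := by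
    obtain ⟨f, hf, hf_apply⟩ := hG x
    rw [hf.fderiv, hf_apply]
  have hL' := hL.continuous_fderiv one_ne_zero
  have hq' := hq.continuous_deriv le_rfl
  have hδq' := hδq.continuous_deriv le_rfl
  refine (intervalIntegral.hasDerivAt_integral_of_continuous_deriv (by fun_prop) (by fun_prop)
    fun s t => ((hL.differentiable one_ne_zero _).hasFDerivAt.comp_hasDerivAt s
      ((hasDerivAt_add_smul _ _ s).prodMk (hasDerivAt_add_smul _ _ s))).add
      ((hasDerivAt_add_smul _ _ s).dot (((hasDerivAt_add_smul _ _ s).sub_const _).fun_sub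
        ((hasDerivAt_id' s).smul_const _)))).congr_deriv ?_
  calc _ = ∫ t in t₁..t₂, (dot (deriv p t) (δq t) + dot (p t) (deriv δq t)) := by
        refine intervalIntegral.integral_congr fun t ht' => ?_
        rw [Set.uIcc_of_le ht.le] at ht'
        simp only [zero_smul, add_zero, one_smul, hgrad, h2 t ht', sub_self, dot_eq_dotProduct,
          dotProduct_zero, zero_add]
        exact dot_add_dot_add_dot_sub_eq (h1 t ht') (h4 t ht' _ (hδΔ t ht'))
    _ = 0 := by
        rw [intervalIntegral.integral_deriv_dot_eq_sub hp hδq, hb1, hb2]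
        simp [dot_eq_dotProduct]

/-- Lagrange-d'Alembert-Pontryagin principle (stationarity
direction).  If the `C¹` curves `(q,v,p)` satisfy the implicit
Lagrange-d'Alembert equations on `[t₁,t₂]` for a `C¹` Lagrangian `L` (with
partial gradients `Lq, Lv`) and a distribution `Δ`, then the
Lagrange-d'Alembert-Pontryagin action is stationary at `s = 0` for every `C¹`
variation `(δq,δv,δp)` with `δq(t₁) = δq(t₂) = 0` and `δq(t) ∈ Δ(q(t))`. -/
theorem lagrange_dAlembert_pontryagin_stationarity {n : ℕ}
    (L : (Fin n → ℝ) × (Fin n → ℝ) → ℝ)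
    (Lq Lv : (Fin n → ℝ) × (Fin n → ℝ) → Fin n → ℝ)
    (hL : ContDiff ℝ 1 L)
    (hG : ∀ x : (Fin n → ℝ) × (Fin n → ℝ),
      ∃ f : ((Fin n → ℝ) × (Fin n → ℝ)) →L[ℝ] ℝ,
        HasFDerivAt L f x ∧
        ∀ y : (Fin n → ℝ) × (Fin n → ℝ), f y = dot (Lq x) y.1 + dot (Lv x) y.2)
    (Δ : (Fin n → ℝ) → Submodule ℝ (Fin n → ℝ))
    (t₁ t₂ : ℝ) (ht : t₁ < t₂)
    (q v p : ℝ → Fin n → ℝ)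
    (hq : ContDiff ℝ 1 q) (hv : ContDiff ℝ 1 v) (hp : ContDiff ℝ 1 p)
    (h1 : ∀ t ∈ Set.Icc t₁ t₂, p t = Lv (q t, v t))
    (h2 : ∀ t ∈ Set.Icc t₁ t₂, deriv q t = v t)
    (h3 : ∀ t ∈ Set.Icc t₁ t₂, v t ∈ Δ (q t))
    (h4 : ∀ t ∈ Set.Icc t₁ t₂, ∀ u ∈ Δ (q t),
      dot (deriv p t - Lq (q t, v t)) u = 0)
    (δq δv δp : ℝ → Fin n → ℝ)
    (hδq : ContDiff ℝ 1 δq) (hδv : ContDiff ℝ 1 δv) (hδp : ContDiff ℝ 1 δp)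
    (hb1 : δq t₁ = 0) (hb2 : δq t₂ = 0)
    (hδΔ : ∀ t ∈ Set.Icc t₁ t₂, δq t ∈ Δ (q t)) :
    HasDerivAt (fun s : ℝ => ∫ t in t₁..t₂,
      (L (q t + s • δq t, v t + s • δv t) +
        dot (p t + s • δp t)
          (deriv q t + s • deriv δq t - v t - s • δv t)))
      0 0 :=
  lagrange_dAlembert_pontryagin_stationarity_general L Lq Lv hL hG Δ t₁ t₂ ht q v p hq hv hp h1 h2
    h4 δq δv δp hδq hδv hδp hb1 hb2 hδΔ
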